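/- arXiv:2506.22264 — 7 statements merged into one kernel-verified Lean document; each statement's English description precedes it below -/
import Mathlib

section
/- Let K be an algebraically closed field of characteristic zero, let n be a natural number, let P be a nonzero polynomial in the multivariate polynomial ring K[X₁,…,Xₙ], and let d₁,…,dₙ be positive integers. Then there exists a nonzero polynomial Q ∈ K[X₁,…,Xₙ] such that P divides the polynomial obtained from Q by substituting Xᵢ ↦ Xᵢ^{dᵢ} for each i (namely one may take the substituted polynomial to be ∏ P(ζ₁X₁,…,ζₙXₙ), the product over all tuples (ζ₁,…,ζₙ) with ζᵢ^{dᵢ} = 1). -/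
/-!
Let `A` be the image of `Q ↦ Q(X₁^{d₁},…,Xₙ^{dₙ})`. Each `Xᵢ` is a root of `T^{dᵢ} - Xᵢ^{dᵢ}`
over `A`, so every polynomial is integral over `A`. A nonzero element `x` of a domain that is
algebraic over a subring divides a nonzero element of it: cancel the powers of `T` in an
annihilating polynomial to get `q` with `q(x) = 0` and `q(0) ≠ 0`; then `x ∣ q(x) - q(0) = -q(0)`.
-/

open MvPolynomial

theorem IsAlgebraic.exists_ne_zero_dvd_algebraMap {R S : Type*} [CommRing R] [CommRing S]
    [IsDomain S] [Algebra R S] [FaithfulSMul R S] {x : S} (hx : IsAlgebraic R x) (hx0 : x ≠ 0) :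
    ∃ r : R, r ≠ 0 ∧ x ∣ algebraMap R S r := by
  obtain ⟨p, hp, hpx⟩ := hx
  obtain ⟨q, hpq, hq⟩ := p.exists_eq_pow_rootMultiplicity_mul_and_not_dvd hp 0
  rw [map_zero, sub_zero, Polynomial.X_dvd_iff] at hq
  rw [hpq] at hpx
  have hqx : Polynomial.aeval x q = 0 := by simpa [hx0] using hpx
  refine ⟨q.coeff 0, hq, dvd_neg.mp ?_⟩
  simpa [hqx] using map_dvd (Polynomial.aeval x) (Polynomial.X_dvd_sub_C (p := q))

theorem MvPolynomial.isIntegral_range_aeval_X_pow {σ R : Type*} [CommRing R]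
    (d : σ → ℕ) (hd : ∀ i, 0 < d i) (p : MvPolynomial σ R) :
    IsIntegral (aeval (R := R) fun i => (X i : MvPolynomial σ R) ^ d i).range p := by
  set A := (aeval (R := R) fun i => (X i : MvPolynomial σ R) ^ d i).range
  have hmem : ∀ p ∈ A, IsIntegral A p := fun p hp => isIntegral_algebraMap (x := (⟨p, hp⟩ : A))
  induction p using MvPolynomial.induction_on with
  | C a => exact hmem _ ⟨C a, aeval_C _ _⟩
  | add p q hp hq => exact hp.add hq
  | mul_X p i hp => exact hp.mul <| .of_pow (hd i) <| hmem _ ⟨X i, aeval_X _ _⟩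

theorem stmt_2_general (K : Type*) [Field K]
    (n : ℕ) (P : MvPolynomial (Fin n) K) (hP : P ≠ 0)
    (d : Fin n → ℕ) (hd : ∀ i, 0 < d i) :
    ∃ Q : MvPolynomial (Fin n) K, Q ≠ 0 ∧
      P ∣ MvPolynomial.aeval (fun i => (X i : MvPolynomial (Fin n) K) ^ d i) Q := by
  obtain ⟨⟨_, Q, rfl⟩, ha0, hdvd⟩ :=
    (isIntegral_range_aeval_X_pow d hd P).isAlgebraic.exists_ne_zero_dvd_algebraMap hP
  exact ⟨Q, fun hQ => ha0 (Subtype.ext (by simp [hQ])), hdvd⟩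

/-- Multivariate form of Lemma `divis`: for a nonzero `P ∈ K[X₁,…,Xₙ]` and
positive integers `d₁,…,dₙ`, there is a nonzero `Q` with
`P ∣ Q(X₁^{d₁},…,Xₙ^{dₙ})`. -/
theorem stmt_2 (K : Type*) [Field K] [IsAlgClosed K] [CharZero K]
    (n : ℕ) (P : MvPolynomial (Fin n) K) (hP : P ≠ 0)
    (d : Fin n → ℕ) (hd : ∀ i, 0 < d i) :
    ∃ Q : MvPolynomial (Fin n) K, Q ≠ 0 ∧
      P ∣ MvPolynomial.aeval (fun i => (X i : MvPolynomial (Fin n) K) ^ d i) Q :=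
  stmt_2_general K n P hP d hd
end

section
/- Let K be an algebraically closed field, and let s, a, b ∈ K with s ≠ 0. Then there exists a 4×4 matrix M over K such that MᵀJM = s·J and the characteristic polynomial of M equals X⁴ + a·X³ + b·X² + a·s·X + s². (Any such M is automatically invertible, since its determinant is s².) -/
/-!
The quartic factors as `(X² + αX + s)(X² + βX + s)` as soon as `α + β = a` and
`αβ = b - 2s`, and such `α, β` are the roots of a quadratic over `K`. The form `J` makes
`⟨e₁, e₄⟩` and `⟨e₂, e₃⟩` orthogonal hyperbolic planes; acting on them by companion matrices
of the two quadratic factors (each of determinant `s`) scales `J` by `s`.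
-/

open Polynomial Matrix

theorem IsAlgClosed.exists_add_eq_and_mul_eq {K : Type*} [Field K] [IsAlgClosed K] (p q : K) :
    ∃ α β : K, α + β = p ∧ α * β = q := by
  obtain ⟨α, hα⟩ := IsAlgClosed.exists_root (X ^ 2 - C p * X + C q)
    (by rw [show (X ^ 2 - C p * X + C q : K[X]).degree = 2 by compute_degree!]; decide)
  refine ⟨α, p - α, by ring, ?_⟩
  simp only [IsRoot, eval_add, eval_sub, eval_mul, eval_pow, eval_X, eval_C] at hα
  linear_combination -hα

def symplecticForm (R : Type*) [CommRing R] : Matrix (Fin 4) (Fin 4) R :=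
  !![0, 0, 0, 1; 0, 0, 1, 0; 0, -1, 0, 0; -1, 0, 0, 0]

section

variable {R : Type*} [CommRing R]

def symplecticCompanion (s α β : R) : Matrix (Fin 4) (Fin 4) R :=
  !![0, 0, 0, -s; 0, 0, -s, 0; 0, 1, -β, 0; 1, 0, 0, -α]

theorem transpose_symplecticCompanion_mul (s α β : R) :
    (symplecticCompanion s α β)ᵀ * symplecticForm R * symplecticCompanion s α β =
      s • symplecticForm R := by
  ext i j
  fin_cases i <;> fin_cases j <;>
    simp [symplecticCompanion, symplecticForm, Matrix.mul_apply, Fin.sum_univ_four] <;> ring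

theorem charmatrix_symplecticCompanion (s α β : R) :
    charmatrix (symplecticCompanion s α β) =
      !![X, 0, 0, C s; 0, X, C s, 0; 0, -1, X + C β, 0; -1, 0, 0, X + C α] := by
  ext i j
  fin_cases i <;> fin_cases j <;> simp [symplecticCompanion]

theorem charpoly_symplecticCompanion (s α β : R) :
    (symplecticCompanion s α β).charpoly = (X ^ 2 + C α * X + C s) * (X ^ 2 + C β * X + C s) := by
  rw [Matrix.charpoly, charmatrix_symplecticCompanion, Matrix.det_succ_row_zero]
  simp [Fin.sum_univ_succ, Matrix.det_fin_three, Fin.succAbove]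
  ring

end

theorem stmt_4_general (K : Type*) [Field K] [IsAlgClosed K] (s a b : K) :
    let J : Matrix (Fin 4) (Fin 4) K :=
      !![0, 0, 0, 1; 0, 0, 1, 0; 0, -1, 0, 0; -1, 0, 0, 0]
    ∃ M : Matrix (Fin 4) (Fin 4) K,
      Mᵀ * J * M = s • J ∧
        M.charpoly = X ^ 4 + C a * X ^ 3 + C b * X ^ 2 + C (a * s) * X + C (s ^ 2) := by
  obtain ⟨α, β, rfl, hαβ⟩ := IsAlgClosed.exists_add_eq_and_mul_eq a (b - 2 * s)
  obtain rfl : b = α * β + 2 * s := by linear_combination -hαβ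
  refine ⟨symplecticCompanion s α β, transpose_symplecticCompanion_mul s α β, ?_⟩
  rw [charpoly_symplecticCompanion]
  simp only [map_add, map_mul, map_pow, map_ofNat]
  ring

/-- Over an algebraically closed field, every polynomial
`X⁴ + aX³ + bX² + asX + s²` with `s ≠ 0` is the characteristic polynomial of a
symplectic similitude matrix with similitude factor `s`. -/
theorem stmt_4 (K : Type*) [Field K] [IsAlgClosed K] (s a b : K) (hs : s ≠ 0) :
    let J : Matrix (Fin 4) (Fin 4) K :=
      !![0, 0, 0, 1; 0, 0, 1, 0; 0, -1, 0, 0; -1, 0, 0, 0]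
    ∃ M : Matrix (Fin 4) (Fin 4) K,
      Mᵀ * J * M = s • J ∧
        M.charpoly = X ^ 4 + C a * X ^ 3 + C b * X ^ 2 + C (a * s) * X + C (s ^ 2) :=
  stmt_4_general K s a b
end

section
/- Let K be a field, let m and n be coprime positive integers, and let c ∈ K be nonzero. Then the polynomial X^m − c·Y^n is irreducible in the polynomial ring K[X, Y]. -/
/-! One of `m`, `n` is odd, and swapping the variables (up to the unit `-c`) lets us assume
that `m` is. As a monic polynomial in `X` over `K[Y]`, `X^m - c Y^n` is irreducible as soon as it
is irreducible over `K(Y)` (Gauss), and for odd `m` this holds unless `c Y^n` is a `p`-th power in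
`K(Y)` for some prime `p ∣ m`. A `p`-th power has degree divisible by `p`, while `c Y^n` has
degree `n`, which is coprime to `m`. -/

open MvPolynomial

namespace RatFunc

variable {K : Type*} [Field K]

theorem intDegree_pow (x : RatFunc K) (k : ℕ) : (x ^ k).intDegree = k * x.intDegree := by
  rcases eq_or_ne x 0 with rfl | hx
  · cases k <;> simp
  induction k with
  | zero => simp
  | succ k ih => rw [pow_succ, intDegree_mul (pow_ne_zero _ hx) hx, ih]; push_cast; ring

theorem natCast_dvd_natDegree_of_pow_eq_algebraMap {f : Polynomial K} {x : RatFunc K} {p : ℕ}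
    (h : x ^ p = algebraMap (Polynomial K) (RatFunc K) f) : (p : ℤ) ∣ f.natDegree :=
  ⟨x.intDegree, by rw [← intDegree_polynomial, ← h, intDegree_pow]⟩

end RatFunc

namespace Polynomial

variable {K : Type*} [Field K]

theorem irreducible_X_pow_sub_C_C_mul_X_pow {m n : ℕ} (hm : Odd m) (hmn : m.Coprime n) {c : K}
    (hc : c ≠ 0) : Irreducible (X ^ m - C (C c * X ^ n) : K[X][X]) := by
  rw [(monic_X_pow_sub_C _ hm.pos.ne').irreducible_iff_irreducible_map_fraction_map
    (K := RatFunc K)]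
  simp only [Polynomial.map_sub, Polynomial.map_pow, map_X, map_C]
  refine X_pow_sub_C_irreducible_of_odd hm fun p hp hpm x hx => hp.ne_one ?_
  have hpn : (p : ℤ) ∣ (C c * X ^ n).natDegree :=
    RatFunc.natCast_dvd_natDegree_of_pow_eq_algebraMap hx
  rw [natDegree_C_mul_X_pow n c hc] at hpn
  exact Nat.eq_one_of_dvd_coprimes hmn hpm (Int.natCast_dvd_natCast.mp hpn)

end Polynomial

namespace MvPolynomial

variable (K : Type*) [Field K]

noncomputable def finTwoEquivPolynomialPolynomial :
    MvPolynomial (Fin 2) K ≃ₐ[K] Polynomial (Polynomial K) :=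
  (finSuccEquiv K 1).trans (Polynomial.mapAlgEquiv (uniqueAlgEquiv K (Fin 1)))

variable {K}

@[simp] theorem finTwoEquivPolynomialPolynomial_X_zero :
    finTwoEquivPolynomialPolynomial K (X 0) = Polynomial.X := by
  rw [finTwoEquivPolynomialPolynomial, AlgEquiv.trans_apply, finSuccEquiv_X_zero]
  simp

@[simp] theorem finTwoEquivPolynomialPolynomial_X_one :
    finTwoEquivPolynomialPolynomial K (X 1) = Polynomial.C Polynomial.X := by
  rw [finTwoEquivPolynomialPolynomial, AlgEquiv.trans_apply, ← Fin.succ_zero_eq_one',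
    finSuccEquiv_X_succ]
  simp

@[simp] theorem finTwoEquivPolynomialPolynomial_C (c : K) :
    finTwoEquivPolynomialPolynomial K (C c) = Polynomial.C (Polynomial.C c) :=
  (finTwoEquivPolynomialPolynomial K).commutes c

theorem irreducible_X_zero_pow_sub_C_mul_X_one_pow_of_odd {m n : ℕ} (hm : Odd m)
    (hmn : m.Coprime n) {c : K} (hc : c ≠ 0) :
    Irreducible ((X 0 : MvPolynomial (Fin 2) K) ^ m - C c * X 1 ^ n) := by
  rw [← MulEquiv.irreducible_iff (finTwoEquivPolynomialPolynomial K)]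
  simpa [Polynomial.C_mul] using Polynomial.irreducible_X_pow_sub_C_C_mul_X_pow hm hmn hc

theorem irreducible_X_one_pow_sub_C_mul_X_zero_pow_of_odd {m n : ℕ} (hm : Odd m)
    (hmn : m.Coprime n) {c : K} (hc : c ≠ 0) :
    Irreducible ((X 1 : MvPolynomial (Fin 2) K) ^ m - C c * X 0 ^ n) := by
  simpa using (irreducible_X_zero_pow_sub_C_mul_X_one_pow_of_odd hm hmn hc).map
    (renameEquiv K (Equiv.swap 0 1))

end MvPolynomial

theorem stmt_5_general (K : Type*) [Field K] (m n : ℕ)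
    (hmn : Nat.Coprime m n) (c : K) (hc : c ≠ 0) :
    Irreducible ((X 0 : MvPolynomial (Fin 2) K) ^ m - C c * X 1 ^ n) := by
  rcases Nat.even_or_odd m with hm | hm
  · have hn : Odd n := Nat.Coprime.odd_of_left (hmn.coprime_dvd_left hm.two_dvd)
    have hunit : IsUnit (-C c : MvPolynomial (Fin 2) K) := (hc.isUnit.map C).neg
    have hfactor : (X 0 : MvPolynomial (Fin 2) K) ^ m - C c * X 1 ^ n =
        -C c * (X 1 ^ n - C c⁻¹ * X 0 ^ m) := by
      have hcc : (C c * C c⁻¹ : MvPolynomial (Fin 2) K) = 1 := by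
        rw [← C_mul, mul_inv_cancel₀ hc, C_1]
      linear_combination -(X 0 ^ m) * hcc
    rw [hfactor, irreducible_isUnit_mul hunit]
    exact irreducible_X_one_pow_sub_C_mul_X_zero_pow_of_odd hn hmn.symm (inv_ne_zero hc)
  · exact irreducible_X_zero_pow_sub_C_mul_X_one_pow_of_odd hm hmn hc

/-- For coprime positive integers `m, n` and a nonzero constant `c`, the
polynomial `X^m - c·Y^n` is irreducible in `K[X, Y]`. -/
theorem stmt_5 (K : Type*) [Field K] (m n : ℕ) (hm : 0 < m) (hn : 0 < n)
    (hmn : Nat.Coprime m n) (c : K) (hc : c ≠ 0) :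
    Irreducible ((X 0 : MvPolynomial (Fin 2) K) ^ m - C c * X 1 ^ n) :=
  stmt_5_general K m n hmn c hc
end

section
/- Let K be an algebraically closed field of characteristic zero, let κ and κ' be positive integers, and set d = gcd(κ, κ'). Let ζ, ζ' ∈ K satisfy ζ^d = 1 and (ζ')^{κ/d} = ζ. Let P be a polynomial in six variables S, S', A, B, A', B' over K, and suppose that the polynomial S^{κ/d} − ζ·(S')^{κ'/d} does not divide P in K[S, S', A, B, A', B']. Then there exist t, α, β, α', β' ∈ K with t ≠ 0 such that P(ζ'·t^{κ'}, t^κ, α, β, α', β') ≠ 0. -/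
open MvPolynomial

/-!
Substitute `S ↦ ζ'·T^κ'`, `S' ↦ T^κ`. With `a = κ/d`, `b = κ'/d`, the polynomial
`Q = S^a - ζ·S'^b` is monic in `S` and is killed by the substitution, because `ζ'^a = ζ` and
`κ'a = κb`; so `P` may be replaced by its remainder `R ≠ 0` modulo `Q`, of `S`-degree `< a`.
Since `a` and `b` are coprime, distinct monomials `S^i S'^j ⋯` with `i < a` are sent to distinct
monomials `T^(κ'i + κj) ⋯`, so the substituted `R` is nonzero. So is its product with `T`, which
over an infinite field does not vanish at some point; that point has `t ≠ 0`.
-/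

theorem Nat.eq_and_eq_of_coprime_of_mul_add_mul_eq {a b i i' j j' : ℕ} (hab : a.Coprime b)
    (hi : i < a) (hi' : i' < a) (h : b * i + a * j = b * i' + a * j') : i = i' ∧ j = j' := by
  have hmod : b * i ≡ b * i' [MOD a] := by
    simpa [Nat.ModEq, Nat.add_mul_mod_self_left] using congrArg (· % a) h
  have hii' : i = i' := by
    simpa [Nat.ModEq, Nat.mod_eq_of_lt hi, Nat.mod_eq_of_lt hi'] using
      Nat.ModEq.cancel_left_of_coprime hab hmod
  subst hii'
  exact ⟨rfl, Nat.eq_of_mul_eq_mul_left (Nat.zero_lt_of_lt hi) (Nat.add_left_cancel h)⟩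

namespace MvPolynomial

variable {σ τ R : Type*}

theorem aeval_monomial_monomial [CommSemiring R] (v : σ → τ →₀ ℕ) (c : σ → R)
    (m : σ →₀ ℕ) (r : R) :
    aeval (fun i => monomial (v i) (c i)) (monomial m r) =
      monomial (Finsupp.linearCombination ℕ v m) (r * m.prod fun i k => c i ^ k) := by
  simp only [aeval_monomial, monomial_pow, Finsupp.prod, Finsupp.linearCombination_apply,
    Finsupp.sum, algebraMap_eq]
  rw [← monomial_sum_prod, C_mul_monomial]

theorem aeval_monomial_monomial_ne_zero [CommSemiring R] [NoZeroDivisors R]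
    {v : σ → τ →₀ ℕ} {c : σ → R} (hc : ∀ i, c i ≠ 0) {p : MvPolynomial σ R}
    (hinj : Set.InjOn (Finsupp.linearCombination ℕ v) p.support) (hp : p ≠ 0) :
    aeval (fun i => monomial (v i) (c i)) p ≠ 0 := by
  classical
  obtain ⟨m, hm⟩ := support_nonempty.mpr hp
  have hcoeff : coeff (Finsupp.linearCombination ℕ v m) (aeval (fun i => monomial (v i) (c i)) p)
      = coeff m p * m.prod fun i k => c i ^ k := by
    conv_lhs => rw [← support_sum_monomial_coeff p]
    rw [map_sum, coeff_sum, Finset.sum_eq_single m]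
    · rw [aeval_monomial_monomial, coeff_monomial, if_pos rfl]
    · intro m' hm' hne
      rw [aeval_monomial_monomial, coeff_monomial, if_neg (hne ∘ hinj hm' hm)]
    · exact fun h => absurd hm h
  intro h
  rw [h, coeff_zero, eq_comm] at hcoeff
  have : Nontrivial R := nontrivial_of_ne _ _ (mem_support_iff.mp hm)
  exact mul_ne_zero (mem_support_iff.mp hm)
    (Finset.prod_ne_zero_iff.mpr fun i _ => pow_ne_zero _ (hc i)) hcoeff

theorem exists_eq_mul_add_of_monic_finSuccEquiv [CommRing R] {n : ℕ}
    {Q : MvPolynomial (Fin (n + 1)) R} (hQ : (finSuccEquiv R n Q).Monic)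
    (P : MvPolynomial (Fin (n + 1)) R) :
    ∃ D r, P = Q * D + r ∧ ∀ m ∈ r.support, m 0 < (finSuccEquiv R n Q).natDegree := by
  set e := finSuccEquiv R n
  refine ⟨e.symm (e P /ₘ e Q), e.symm (e P %ₘ e Q), e.injective ?_, fun m hm => ?_⟩
  · rw [map_add, map_mul, e.apply_symm_apply, e.apply_symm_apply]
    exact (Polynomial.modByMonic_add_div (e P) (e Q)).symm.trans (add_comm _ _)
  · have : Nontrivial R := nontrivial_of_ne _ _ (mem_support_iff.mp hm)
    have hr : e P %ₘ e Q ≠ 0 := by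
      rintro h
      rw [h, map_zero] at hm
      exact Finset.notMem_empty m hm
    calc m 0 ≤ degreeOf 0 (e.symm (e P %ₘ e Q)) := monomial_le_degreeOf 0 hm
      _ = (e P %ₘ e Q).natDegree := by rw [← natDegree_finSuccEquiv, e.apply_symm_apply]
      _ < (e Q).natDegree :=
        Polynomial.natDegree_lt_natDegree hr (Polynomial.degree_modByMonic_lt _ hQ)

theorem finSuccEquiv_X_zero_pow_sub_C_mul_X_one_pow [CommRing R] {n : ℕ} (a b : ℕ) (c : R) :
    finSuccEquiv R (n + 1) (X 0 ^ a - C c * X 1 ^ b) =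
      Polynomial.X ^ a - Polynomial.C (C c * X 0 ^ b) := by
  rw [← Fin.succ_zero_eq_one, map_sub, map_mul, map_pow, map_pow, finSuccEquiv_X_zero,
    finSuccEquiv_X_succ, Polynomial.C_mul, Polynomial.C_pow]
  simp [finSuccEquiv_apply]

theorem eval_aeval [CommSemiring R] (x : τ → R) (f : σ → MvPolynomial τ R)
    (p : MvPolynomial σ R) : eval x (aeval f p) = eval (fun i => eval x (f i)) p := by
  rw [aeval_eq_bind₁]
  exact eval₂Hom_bind₁ (RingHom.id R) x f p

theorem exists_apply_ne_zero_and_eval_ne_zero [CommRing R] [IsDomain R] [Infinite R]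
    {p : MvPolynomial σ R} (hp : p ≠ 0) (i : σ) : ∃ x : σ → R, x i ≠ 0 ∧ eval x p ≠ 0 := by
  by_contra! h
  refine mul_ne_zero (X_ne_zero i) hp (funext fun x => ?_)
  rw [map_mul, eval_X, map_zero]
  by_cases hx : x i = 0
  · rw [hx, zero_mul]
  · rw [h x hx, mul_zero]

end MvPolynomial

section Curve

variable {K : Type*} [Field K] (κ κ' : ℕ) (ζ' : K)

noncomputable def curveExponent : Fin 6 → Fin 5 →₀ ℕ :=
  ![.single 0 κ', .single 0 κ, .single 1 1, .single 2 1, .single 3 1, .single 4 1]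

noncomputable def curveSubst (i : Fin 6) : MvPolynomial (Fin 5) K :=
  monomial (curveExponent κ κ' i) (![ζ', 1, 1, 1, 1, 1] i)

theorem eval_curveSubst (x : Fin 5 → K) :
    (fun i => eval x (curveSubst κ κ' ζ' i)) = ![ζ' * x 0 ^ κ', x 0 ^ κ, x 1, x 2, x 3, x 4] := by
  funext i
  fin_cases i <;> simp [curveSubst, curveExponent, eval_monomial]

theorem aeval_curveSubst_eq_zero :
    aeval (curveSubst κ κ' ζ')
      (X 0 ^ (κ / κ.gcd κ') - C (ζ' ^ (κ / κ.gcd κ')) * X 1 ^ (κ' / κ.gcd κ')) = 0 := by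
  have h : κ' * (κ / κ.gcd κ') = κ * (κ' / κ.gcd κ') := by
    rw [← Nat.mul_div_assoc _ (κ.gcd_dvd_left κ'), ← Nat.mul_div_assoc _ (κ.gcd_dvd_right κ'),
      mul_comm]
  simp only [map_sub, map_mul, map_pow, aeval_X, aeval_C, algebraMap_eq, curveSubst, curveExponent,
    Matrix.cons_val_zero, Matrix.cons_val_one]
  simp only [monomial_pow, ← C_pow, C_mul_monomial, Finsupp.smul_single, smul_eq_mul, mul_one,
    one_pow]
  rw [mul_comm (κ / _), h, mul_comm (κ' / _), sub_self]

theorem linearCombination_curveExponent_apply (m : Fin 6 →₀ ℕ) :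
    Finsupp.linearCombination ℕ (curveExponent κ κ') m =
      ![κ' * m 0 + κ * m 1, m 2, m 3, m 4, m 5] := by
  ext j
  fin_cases j <;> simp [Finsupp.linearCombination_apply, Finsupp.sum_fintype, Fin.sum_univ_six,
    curveExponent, mul_comm]

theorem injOn_linearCombination_curveExponent (hκ : 0 < κ) :
    Set.InjOn (Finsupp.linearCombination ℕ (curveExponent κ κ')) {m | m 0 < κ / κ.gcd κ'} := by
  intro m hm m' hm' h
  have hj := DFunLike.congr_fun h
  simp only [linearCombination_curveExponent_apply] at hj
  have hd : 0 < κ.gcd κ' := Nat.gcd_pos_of_pos_left _ hκ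
  have h0 : κ' / κ.gcd κ' * m 0 + κ / κ.gcd κ' * m 1 =
      κ' / κ.gcd κ' * m' 0 + κ / κ.gcd κ' * m' 1 := by
    apply Nat.eq_of_mul_eq_mul_left hd
    simp only [Nat.mul_add, ← Nat.mul_assoc, Nat.mul_div_cancel' (κ.gcd_dvd_left κ'),
      Nat.mul_div_cancel' (κ.gcd_dvd_right κ')]
    exact hj 0
  obtain ⟨h0, h1⟩ :=
    Nat.eq_and_eq_of_coprime_of_mul_add_mul_eq (Nat.coprime_div_gcd_div_gcd hd) hm hm' h0
  ext i
  fin_cases i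
  exacts [h0, h1, hj 1, hj 2, hj 3, hj 4]

end Curve

theorem stmt_10_general (K : Type*) [Field K] [CharZero K]
    (κ κ' : ℕ) (hκ : 0 < κ) (d : ℕ) (hd : d = Nat.gcd κ κ')
    (ζ ζ' : K) (hζ : ζ ^ d = 1) (hζ' : ζ' ^ (κ / d) = ζ)
    (P : MvPolynomial (Fin 6) K)
    (hP : ¬ ((X 0 : MvPolynomial (Fin 6) K) ^ (κ / d) - C ζ * X 1 ^ (κ' / d)) ∣ P) :
    ∃ t α β α' β' : K, t ≠ 0 ∧
      MvPolynomial.eval ![ζ' * t ^ κ', t ^ κ, α, β, α', β'] P ≠ 0 := by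
  subst hd hζ'
  set a := κ / κ.gcd κ'
  have hgcd : 0 < κ.gcd κ' := Nat.gcd_pos_of_pos_left _ hκ
  have ha : 0 < a := Nat.div_pos (Nat.gcd_le_left _ hκ) hgcd
  have hζ'0 : ζ' ≠ 0 := by
    rintro rfl
    simp [ha.ne', hgcd.ne'] at hζ
  set Q : MvPolynomial (Fin 6) K := X 0 ^ a - C (ζ' ^ a) * X 1 ^ (κ' / κ.gcd κ')
  have hQ := finSuccEquiv_X_zero_pow_sub_C_mul_X_one_pow (n := 4) a (κ' / κ.gcd κ') (ζ' ^ a)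
  obtain ⟨D, r, rfl, hr⟩ := exists_eq_mul_add_of_monic_finSuccEquiv
    (hQ ▸ Polynomial.monic_X_pow_sub_C _ ha.ne') P
  rw [hQ, Polynomial.natDegree_X_pow_sub_C] at hr
  have hr0 : r ≠ 0 := by
    rintro rfl
    exact hP (Dvd.intro D (add_zero _).symm)
  have hφ : aeval (curveSubst κ κ' ζ') (Q * D + r) ≠ 0 := by
    rw [map_add, map_mul, aeval_curveSubst_eq_zero, zero_mul, zero_add]
    exact aeval_monomial_monomial_ne_zero (fun i => by fin_cases i <;> simp [hζ'0])
      ((injOn_linearCombination_curveExponent κ κ' hκ).mono hr) hr0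
  obtain ⟨x, hx0, hx⟩ := exists_apply_ne_zero_and_eval_ne_zero hφ 0
  exact ⟨x 0, x 1, x 2, x 3, x 4, hx0, by rwa [eval_aeval, eval_curveSubst] at hx⟩

/-- Algebraic core of the non-vanishing lemma: if `P ∈ K[S,S',A,B,A',B']` is not
divisible by `S^{κ/d} − ζ·(S')^{κ'/d}` (where `d = gcd(κ,κ')`, `ζ^d = 1`,
`(ζ')^{κ/d} = ζ`), then there exist `t ≠ 0` and `α, β, α', β'` with
`P(ζ'·t^{κ'}, t^κ, α, β, α', β') ≠ 0`. -/
theorem stmt_10 (K : Type*) [Field K] [IsAlgClosed K] [CharZero K]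
    (κ κ' : ℕ) (hκ : 0 < κ) (hκ' : 0 < κ') (d : ℕ) (hd : d = Nat.gcd κ κ')
    (ζ ζ' : K) (hζ : ζ ^ d = 1) (hζ' : ζ' ^ (κ / d) = ζ)
    (P : MvPolynomial (Fin 6) K)
    (hP : ¬ ((X 0 : MvPolynomial (Fin 6) K) ^ (κ / d) - C ζ * X 1 ^ (κ' / d)) ∣ P) :
    ∃ t α β α' β' : K, t ≠ 0 ∧
      MvPolynomial.eval ![ζ' * t ^ κ', t ^ κ, α, β, α', β'] P ≠ 0 :=
  stmt_10_general K κ κ' hκ d hd ζ ζ' hζ hζ' P hP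
end

section
/- Let R be a commutative ring and let c be a unit of R. Let σ be an R-algebra homomorphism from the Laurent polynomial ring R[T, T⁻¹] to itself satisfying σ(T) = c·T⁻¹. Then every f ∈ R[T, T⁻¹] with σ(f) = f belongs to the R-subalgebra of R[T, T⁻¹] generated by the single element T + c·T⁻¹. -/
/-!
Write `x = T` and `y = c·T⁻¹`, so that `x * y = c` and `σ` swaps `x` and `y`. An invariant `f` has
symmetric coefficients, `f₋ₙ = cⁿ fₙ`, so subtracting `f_N (xᴺ + yᴺ)` for its top degree `N > 0`
leaves an invariant Laurent polynomial of smaller degree; by induction `f` is a combination of the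
power sums `xⁿ + yⁿ`. These lie in `R[x + y]` because `xⁿ + yⁿ = Dₙ(x + y, c)` for the Dickson
polynomial `Dₙ`.
-/

open LaurentPolynomial

theorem Polynomial.aeval_add_dickson_one {R A : Type*} [CommRing R] [CommRing A] [Algebra R A]
    {a : R} {x y : A} (h : x * y = algebraMap R A a) (n : ℕ) :
    aeval (x + y) (dickson 1 a n) = x ^ n + y ^ n := by
  induction n using Nat.twoStepInduction with
  | zero => norm_num [dickson_zero, one_add_one_eq_two, map_ofNat]
  | one => simp [dickson_one]
  | more n ih₀ ih₁ =>
    rw [dickson_add_two, map_sub, map_mul, map_mul, ih₀, ih₁, aeval_X, aeval_C, ← h]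
    ring

theorem pow_add_pow_mem_adjoin_add {R A : Type*} [CommRing R] [CommRing A] [Algebra R A]
    {a : R} {x y : A} (h : x * y = algebraMap R A a) (n : ℕ) :
    x ^ n + y ^ n ∈ Algebra.adjoin R {x + y} := by
  rw [Algebra.adjoin_singleton_eq_range_aeval]
  exact ⟨_, Polynomial.aeval_add_dickson_one h n⟩

namespace LaurentPolynomial

theorem coeff_C_mul_T {R : Type*} [Semiring R] (a : R) (n m : ℤ) :
    (C a * T n : R[T;T⁻¹]).coeff m = if n = m then a else 0 := by
  rw [← single_eq_C_mul_T]
  exact Finsupp.single_apply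

section CommSemiring

variable {R : Type*} [CommSemiring R]

theorem C_mul_T_neg_one_pow (a : R) (n : ℕ) :
    (C a * T (-1) : R[T;T⁻¹]) ^ n = C (a ^ n) * T (-n) := by
  rw [mul_pow, ← map_pow, T_pow, mul_neg_one]

theorem T_one_mul_C_mul_T_neg_one (a : R) : (T 1 * (C a * T (-1)) : R[T;T⁻¹]) = C a := by
  rw [mul_left_comm, ← T_add, add_neg_cancel, T_zero, mul_one]

theorem algHom_apply_C (σ : R[T;T⁻¹] →ₐ[R] R[T;T⁻¹]) (a : R) : σ (C a) = C a := by
  rw [C_eq_algebraMap, σ.commutes]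

theorem map_T_of_map_T_one {F : Type*} [FunLike F R[T;T⁻¹] R[T;T⁻¹]]
    [RingHomClass F R[T;T⁻¹] R[T;T⁻¹]] {σ : F} {c : Rˣ}
    (hσ : σ (T 1) = C (c : R) * T (-1)) (n : ℤ) :
    σ (T n) = C ((c ^ n : Rˣ) : R) * T (-n) := by
  induction n using Int.induction_on with
  | zero => simp
  | succ n ih =>
    rw [T_add, map_mul, ih, hσ, mul_mul_mul_comm, ← map_mul, ← T_add, ← Units.val_mul,
      ← zpow_add_one, neg_add]
  | pred n ih =>
    have hu : IsUnit (C (c : R) * T (-1)) := (c.isUnit.map C).mul (isUnit_T (-1))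
    apply hu.mul_right_cancel
    rw [← hσ, ← map_mul, ← T_add, sub_add_cancel, ih, hσ, mul_mul_mul_comm, ← map_mul, ← T_add,
      ← Units.val_mul, ← zpow_add_one, sub_add_cancel]
    congr 2
    ring

variable {c : Rˣ} {σ : R[T;T⁻¹] →ₐ[R] R[T;T⁻¹]}

theorem map_C_mul_T_neg_one (hσ : σ (T 1) = C (c : R) * T (-1)) :
    σ (C (c : R) * T (-1)) = T 1 := by
  rw [map_mul, map_T_of_map_T_one hσ, algHom_apply_C, ← mul_assoc, ← map_mul, ← Units.val_mul,
    zpow_neg_one, mul_inv_cancel, Units.val_one, map_one, one_mul, neg_neg]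

theorem coeff_map_neg_of_map_T_one (hσ : σ (T 1) = C (c : R) * T (-1)) (f : R[T;T⁻¹]) (n : ℤ) :
    (σ f).coeff (-n) = ((c ^ n : Rˣ) : R) * f.coeff n := by
  induction f using LaurentPolynomial.induction_on' with
  | add p q hp hq =>
    simp only [map_add, AddMonoidAlgebra.coeff_add, Finsupp.add_apply, hp, hq, mul_add]
  | C_mul_T m a =>
    rw [map_mul, map_T_of_map_T_one hσ, algHom_apply_C, ← mul_assoc, ← map_mul, coeff_C_mul_T,
      coeff_C_mul_T]
    simp only [neg_inj]
    split_ifs with h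
    · rw [h, mul_comm]
    · rw [mul_zero]

theorem coeff_neg_of_map_eq_self (hσ : σ (T 1) = C (c : R) * T (-1)) {f : R[T;T⁻¹]}
    (hf : σ f = f) (n : ℤ) : f.coeff (-n) = ((c ^ n : Rˣ) : R) * f.coeff n := by
  simpa only [hf] using coeff_map_neg_of_map_T_one hσ f n

theorem eq_C_of_map_eq_self (hσ : σ (T 1) = C (c : R) * T (-1)) {f : R[T;T⁻¹]}
    (hf : σ f = f) (hpos : ∀ m : ℕ, 0 < m → f.coeff m = 0) : f = C (f.coeff 0) := by
  refine LaurentPolynomial.ext fun m => ?_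
  rw [← mul_one (C _), ← T_zero, coeff_C_mul_T]
  obtain ⟨k, rfl | rfl⟩ := Int.eq_nat_or_neg m <;> rcases Nat.eq_zero_or_pos k with rfl | hk
  · simp
  · rw [hpos k hk, if_neg (by omega)]
  · simp
  · rw [coeff_neg_of_map_eq_self hσ hf, hpos k hk, mul_zero, if_neg (by omega)]

end CommSemiring

variable {R : Type*} [CommRing R] {c : Rˣ} {σ : R[T;T⁻¹] →ₐ[R] R[T;T⁻¹]}

theorem mem_adjoin_of_map_eq_self_of_coeff_eq_zero (hσ : σ (T 1) = C (c : R) * T (-1)) (N : ℕ)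
    {f : R[T;T⁻¹]} (hf : σ f = f) (hN : ∀ m : ℕ, N < m → f.coeff m = 0) :
    f ∈ Algebra.adjoin R {T 1 + C (c : R) * T (-1)} := by
  induction N generalizing f with
  | zero =>
    rw [eq_C_of_map_eq_self hσ hf hN, C_eq_algebraMap]
    exact Subalgebra.algebraMap_mem _ _
  | succ N ih =>
    set b := f.coeff ((N + 1 : ℕ) : ℤ)
    set s : R[T;T⁻¹] := T 1 ^ (N + 1) + (C (c : R) * T (-1)) ^ (N + 1)
    have hs : s ∈ Algebra.adjoin R {T 1 + C (c : R) * T (-1)} :=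
      pow_add_pow_mem_adjoin_add (T_one_mul_C_mul_T_neg_one _) _
    have hσs : σ s = s := by
      rw [map_add, map_pow, map_pow, hσ, map_C_mul_T_neg_one hσ, add_comm]
    have hcoeff : ∀ m : ℕ, N < m → (f - C b * s).coeff m = 0 := by
      intro m hm
      dsimp only [s]
      rw [T_pow, mul_one, C_mul_T_neg_one_pow, mul_add, ← mul_assoc, ← map_mul,
        AddMonoidAlgebra.coeff_sub, AddMonoidAlgebra.coeff_add, Finsupp.sub_apply,
        Finsupp.add_apply, coeff_C_mul_T, coeff_C_mul_T,
        if_neg (show -((N + 1 : ℕ) : ℤ) ≠ m by omega), add_zero]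
      rcases (Nat.succ_le_of_lt hm).eq_or_lt with rfl | hm'
      · rw [if_pos rfl, sub_self]
      · rw [if_neg (by omega), hN m hm', sub_zero]
    have hg := ih (f := f - C b * s) (by rw [map_sub, map_mul, hf, hσs, algHom_apply_C]) hcoeff
    rw [← sub_add_cancel f (C b * s), C_eq_algebraMap]
    exact add_mem hg (mul_mem (Subalgebra.algebraMap_mem _ b) hs)

end LaurentPolynomial

/-- A Laurent polynomial invariant under the substitution `T ↦ c·T⁻¹` (for a
unit `c`) lies in the subalgebra generated by `T + c·T⁻¹`. -/
theorem stmt_11 (R : Type*) [CommRing R] (c : Rˣ)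
    (σ : R[T;T⁻¹] →ₐ[R] R[T;T⁻¹]) (hσ : σ (T 1) = C (c : R) * T (-1))
    (f : R[T;T⁻¹]) (hf : σ f = f) :
    f ∈ Algebra.adjoin R {(T 1 + C (c : R) * T (-1) : R[T;T⁻¹])} := by
  refine mem_adjoin_of_map_eq_self_of_coeff_eq_zero hσ (f.coeff.support.sup Int.toNat) hf
    fun m hm => Finsupp.notMem_support_iff.mp fun hmem => ?_
  have := Finset.le_sup (f := Int.toNat) hmem
  omega
end

section
/- Let N be a positive integer and let χ be a Dirichlet character modulo N with values in ℂ. Let d be the order of χ, i.e., the order of χ as an element of the group of Dirichlet characters modulo N. Then for every ζ ∈ ℂ with ζ^d = 1, the set of prime numbers p such that χ(p) = ζ is infinite. -/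
/-!
The values of `χ` on units form a finite subgroup of `ℂˣ`, hence a cyclic one, and its exponent
is the order `d` of `χ`. So it has `d` elements, and being contained in the `d`-th roots of unity
it is all of them. For a unit `a` with `χ a = ζ`, Dirichlet's theorem gives infinitely many primes
`p ≡ a [MOD N]`.
-/

namespace MulChar

variable {M R : Type*} [CommMonoid M] [CommRing R] (χ : MulChar M R)

theorem pow_eq_one_iff {n : ℕ} : χ ^ n = 1 ↔ ∀ a : Mˣ, χ a ^ n = 1 := by
  simp only [MulChar.ext_iff, pow_apply_coe, one_apply_coe]

theorem orderOf_eq_exponent_range_toUnitHom :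
    orderOf χ = Monoid.exponent χ.toUnitHom.range := by
  refine Nat.dvd_right_iff_eq.mp fun n ↦ ?_
  rw [orderOf_dvd_iff_pow_eq_one, Monoid.exponent_dvd_iff_forall_pow_eq_one, pow_eq_one_iff]
  constructor
  · rintro h ⟨_, a, rfl⟩
    ext
    simp only [Subgroup.coe_pow, Units.val_pow_eq_pow_val, coe_toUnitHom, h a,
      OneMemClass.coe_one, Units.val_one]
  · intro h a
    have := congr_arg (fun u : χ.toUnitHom.range ↦ ((u : Rˣ) : R)) (h ⟨_, a, rfl⟩)
    simpa only [Subgroup.coe_pow, Units.val_pow_eq_pow_val, coe_toUnitHom,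
      OneMemClass.coe_one, Units.val_one] using this

variable [IsDomain R] [Finite Mˣ]

theorem range_toUnitHom_eq_rootsOfUnity :
    χ.toUnitHom.range = rootsOfUnity (orderOf χ) R := by
  have : NeZero (orderOf χ) := ⟨χ.orderOf_pos.ne'⟩
  have hle : χ.toUnitHom.range ≤ rootsOfUnity (orderOf χ) R := by
    rintro _ ⟨a, rfl⟩
    rw [mem_rootsOfUnity, Units.ext_iff, Units.val_pow_eq_pow_val, coe_toUnitHom, Units.val_one]
    exact (pow_eq_one_iff χ).mp (pow_orderOf_eq_one χ) a
  have : Finite χ.toUnitHom.range := Finite.of_surjective _ χ.toUnitHom.rangeRestrict_surjective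
  refine Subgroup.eq_of_le_of_card_ge hle ?_
  calc Nat.card (rootsOfUnity (orderOf χ) R) ≤ orderOf χ := card_rootsOfUnity R _
    _ = Nat.card χ.toUnitHom.range := by
      rw [orderOf_eq_exponent_range_toUnitHom, IsCyclic.exponent_eq_card]

theorem exists_apply_eq_of_pow_orderOf_eq_one {ζ : R} (hζ : ζ ^ orderOf χ = 1) :
    ∃ a : Mˣ, χ a = ζ := by
  have : NeZero (orderOf χ) := ⟨χ.orderOf_pos.ne'⟩
  have hmem : ((rootsOfUnity.mkOfPowEq ζ hζ : rootsOfUnity (orderOf χ) R) : Rˣ) ∈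
      χ.toUnitHom.range := by
    rw [range_toUnitHom_eq_rootsOfUnity]
    exact SetLike.coe_mem _
  obtain ⟨a, ha⟩ := hmem
  exact ⟨a, by rw [← coe_toUnitHom, ha, rootsOfUnity.val_mkOfPowEq_coe]⟩

end MulChar

/-- If `χ` is a Dirichlet character modulo `N` of order `d`, then for every
`d`-th root of unity `ζ ∈ ℂ`, there are infinitely many primes `p` with
`χ(p) = ζ`. -/
theorem stmt_12 (N : ℕ) (hN : 0 < N) (χ : DirichletCharacter ℂ N)
    (ζ : ℂ) (hζ : ζ ^ orderOf χ = 1) :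
    {p : ℕ | p.Prime ∧ χ p = ζ}.Infinite := by
  have : NeZero N := ⟨hN.ne'⟩
  obtain ⟨a, ha⟩ := χ.exists_apply_eq_of_pow_orderOf_eq_one hζ
  refine (Nat.infinite_setOfPred_prime_and_eq_mod a.isUnit).mono fun p hp ↦ ⟨hp.1, ?_⟩
  rw [hp.2, ha]
end

section
/- Let K be a field and let S ∈ K[X, Y] be a polynomial in two variables that is not constant (i.e., not in the image of K). Then, in the polynomial ring K[X₁, Y₁, X₂, Y₂] in four variables, the two elements S(X₁, Y₁) and S(X₂, Y₂) are algebraically independent over K; that is, for every nonzero polynomial P ∈ K[U, V], the element P(S(X₁, Y₁), S(X₂, Y₂)) of K[X₁, Y₁, X₂, Y₂] is nonzero. -/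
/-!
Map `K[X₁, Y₁, X₂, Y₂]` to `K[X, Y][X', Y']` by sending `X₁, Y₁` to the outer variables
`X', Y'` and `X₂, Y₂` to the constants `X, Y`. There `S(X₂, Y₂)` becomes the constant `S`,
transcendental over `K`, while `S(X₁, Y₁)` becomes `S` read with coefficients in `K[X, Y]`,
still non-constant and hence transcendental over `K[X, Y]`. Such a pair is algebraically
independent over `K`, and algebraic independence pulls back along algebra maps.
-/

open MvPolynomial

namespace MvPolynomial

theorem aeval_X_eq_map {σ R A : Type*} [CommSemiring R] [CommSemiring A] [Algebra R A]
    (p : MvPolynomial σ R) : aeval (X : σ → MvPolynomial σ A) p = map (algebraMap R A) p := by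
  rw [map_eq_eval₂Hom_C_comp]
  rfl

theorem map_ne_C_of_injective {σ R S : Type*} [CommSemiring R] [CommSemiring S] {f : R →+* S}
    (hf : Function.Injective f) {p : MvPolynomial σ R} (hp : ∀ c, p ≠ C c) (c : S) :
    map f p ≠ C c := by
  classical
  intro hc
  apply hp (p.coeff 0)
  rw [← vars_eq_empty_iff_eq_C, ← vars_map_of_injective p hf, hc, vars_C]

section IsDomain

variable {σ R : Type*} [CommRing R] [IsDomain R]

theorem transcendental_of_degreeOf_ne_zero {p : MvPolynomial σ R} {i : σ}
    (h : p.degreeOf i ≠ 0) : Transcendental R p := by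
  classical
  let e := (renameEquiv R (Equiv.optionSubtypeNe i).symm).trans (optionEquivLeft R {j // j ≠ i})
  rw [degreeOf_eq_natDegree] at h
  have he : Transcendental R (e p) :=
    (Polynomial.transcendental _ h (mem_nonZeroDivisors_of_ne_zero
      (Polynomial.leadingCoeff_ne_zero.mpr (Polynomial.ne_zero_of_natDegree_gt
        (Nat.pos_of_ne_zero h))))).restrictScalars (C_injective _ _)
  exact fun hp => he (hp.algHom e.toAlgHom)

theorem transcendental_of_ne_C {p : MvPolynomial σ R} (hp : ∀ c, p ≠ C c) :
    Transcendental R p := by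
  classical
  obtain ⟨i, hi⟩ : p.vars.Nonempty :=
    Finset.nonempty_iff_ne_empty.mpr fun h => hp _ (vars_eq_empty_iff_eq_C.mp h)
  exact transcendental_of_degreeOf_ne_zero (mem_vars_iff_degreeOf_ne_zero.mp hi)

end IsDomain

end MvPolynomial

theorem algebraicIndependent_pair_of_transcendental {R S A : Type*} [CommRing R] [CommRing S]
    [CommRing A] [Algebra R S] [Algebra S A] [Algebra R A] [IsScalarTower R S A]
    {x : S} {y : A} (hx : Transcendental R x) (hy : Transcendental S y) :
    AlgebraicIndependent R ![y, algebraMap S A x] := by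
  have h := (algebraicIndependent_iff_transcendental.mpr hx).sumElim_comp
    (algebraicIndependent_iff_transcendental.mpr hy)
  refine (algebraicIndependent_equiv' finSumFinEquiv ?_).mp h
  ext (i | i) <;> fin_cases i <;> rfl

theorem MvPolynomial.algebraicIndependent_map_algebraMap_C {σ τ R : Type*} [CommRing R]
    [IsDomain R] {p : MvPolynomial σ R} {q : MvPolynomial τ R} (hp : ∀ c, p ≠ C c)
    (hq : ∀ c, q ≠ C c) :
    AlgebraicIndependent R
      ![map (algebraMap R (MvPolynomial τ R)) p, (C q : MvPolynomial σ (MvPolynomial τ R))] :=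
  algebraicIndependent_pair_of_transcendental (transcendental_of_ne_C hq)
    (transcendental_of_ne_C (map_ne_C_of_injective (C_injective τ R) hp))

/-- If `S ∈ K[X, Y]` is non-constant, then `S(X₁, Y₁)` and `S(X₂, Y₂)` are
algebraically independent in `K[X₁, Y₁, X₂, Y₂]`: for every nonzero
`P ∈ K[U, V]`, the element `P(S(X₁,Y₁), S(X₂,Y₂))` is nonzero. -/
theorem stmt_13 (K : Type*) [Field K] (S : MvPolynomial (Fin 2) K)
    (hS : ∀ c : K, S ≠ C c) :
    AlgebraicIndependent K
      ![(aeval ![(X 0 : MvPolynomial (Fin 4) K), X 1]) S,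
        (aeval ![(X 2 : MvPolynomial (Fin 4) K), X 3]) S] ∧
      ∀ P : MvPolynomial (Fin 2) K, P ≠ 0 →
        (aeval ![(aeval ![(X 0 : MvPolynomial (Fin 4) K), X 1]) S,
                 (aeval ![(X 2 : MvPolynomial (Fin 4) K), X 3]) S]) P ≠ 0 := by
  let f : MvPolynomial (Fin 4) K →ₐ[K] MvPolynomial (Fin 2) (MvPolynomial (Fin 2) K) :=
    aeval ![X 0, X 1, C (X 0), C (X 1)]
  have hf₁ : f (aeval ![X 0, X 1] S) = map (algebraMap K _) S := by
    rw [comp_aeval_apply, ← aeval_X_eq_map]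
    congr 2
    funext i; fin_cases i <;> simp [f]
  have hf₂ : f (aeval ![X 2, X 3] S) = C S := by
    conv_rhs => rw [← aeval_X_left_apply S, ← algebraMap_eq, ← IsScalarTower.coe_toAlgHom' K,
      comp_aeval_apply]
    rw [comp_aeval_apply]
    congr 2
    funext i; fin_cases i <;> simp [f]
  have hindep : AlgebraicIndependent K
      ![aeval ![(X 0 : MvPolynomial (Fin 4) K), X 1] S, aeval ![X 2, X 3] S] := by
    refine .of_comp f ?_
    convert algebraicIndependent_map_algebraMap_C hS hS using 1
    funext i; fin_cases i
    exacts [hf₁, hf₂]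
  exact ⟨hindep, fun P hP => mt (algebraicIndependent_iff.mp hindep P) hP⟩
end
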